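/- arXiv:1803.07425 — 4 statements merged into one kernel-verified Lean document; each statement's English description precedes it below -/
import Mathlib

section
/- Let n ≥ 2 be an integer, λ > 1/(n-1), μ > 0 and y₀ > 0. Suppose r : [0, y₀) → ℝ is twice continuously differentiable with r(y) > 0 and r(y) > y·r'(y) for all 0 ≤ y < y₀, r(0) = μ, r'(0) = 0, and r''(y)/(1 + r'(y)²) = (n-1)/r(y) − (1 + r'(y)²)/(λ(r(y) − y·r'(y))) holds for all 0 < y < y₀. Then there exists a constant M₁ > 0 such that 0 < r'(y) ≤ M₁ for all 0 < y < y₀ and μ ≤ r(y) ≤ μ + M₁·y₀ for all 0 < y < y₀. -/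
open Set Filter Topology

/-- Uniform bounds for the solution of the inverse mean curvature flow soliton
ODE on `[0, y₀)` with `λ > 1/(n-1)`: the derivative is positive and bounded,
and the solution is bounded between `μ` and `μ + M₁ y₀`. -/
theorem deriv_upper_bound (n : ℕ) (hn : 2 ≤ n) (lam : ℝ)
    (hlam : 1 / ((n : ℝ) - 1) < lam)
    (mu : ℝ) (hmu : 0 < mu) (y₀ : ℝ) (hy₀ : 0 < y₀)
    (r : ℝ → ℝ) (hC : ContDiffOn ℝ 2 r (Set.Ico 0 y₀))
    (hpos : ∀ y ∈ Set.Ico (0 : ℝ) y₀, 0 < r y)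
    (hstruct : ∀ y ∈ Set.Ico (0 : ℝ) y₀,
      y * derivWithin r (Set.Ico 0 y₀) y < r y)
    (hr0 : r 0 = mu)
    (hr'0 : derivWithin r (Set.Ico 0 y₀) 0 = 0)
    (hode : ∀ y ∈ Set.Ioo (0 : ℝ) y₀,
      derivWithin (derivWithin r (Set.Ico 0 y₀)) (Set.Ico 0 y₀) y /
          (1 + (derivWithin r (Set.Ico 0 y₀) y) ^ 2) =
        ((n : ℝ) - 1) / r y -
          (1 + (derivWithin r (Set.Ico 0 y₀) y) ^ 2) /
            (lam * (r y - y * derivWithin r (Set.Ico 0 y₀) y))) :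
    ∃ M₁ : ℝ, 0 < M₁ ∧
      (∀ y ∈ Set.Ioo (0 : ℝ) y₀,
        0 < derivWithin r (Set.Ico 0 y₀) y ∧
          derivWithin r (Set.Ico 0 y₀) y ≤ M₁) ∧
      (∀ y ∈ Set.Ioo (0 : ℝ) y₀, mu ≤ r y ∧ r y ≤ mu + M₁ * y₀) := by
  have hc : (0:ℝ) < (n:ℝ) - 1 := by
    have : (2:ℝ) ≤ (n:ℝ) := by exact_mod_cast hn
    linarith
  have hlam0 : 0 < lam := lt_trans (div_pos one_pos hc) hlam
  have hlc : 1 < lam * ((n:ℝ) - 1) := by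
    rw [div_lt_iff₀ hc] at hlam; nlinarith
  set s : Set ℝ := Set.Ico 0 y₀ with hsdef
  set f : ℝ → ℝ := derivWithin r s with hfdef
  set g : ℝ → ℝ := derivWithin f s with hgdef
  have hu : UniqueDiffOn ℝ s := uniqueDiffOn_Ico 0 y₀
  have h0s : (0:ℝ) ∈ s := ⟨le_refl 0, hy₀⟩
  have hsub : Set.Ioo (0:ℝ) y₀ ⊆ s := Set.Ioo_subset_Ico_self
  have hrc : ContinuousOn r s := hC.continuousOn
  have hrd : DifferentiableOn ℝ r s := hC.differentiableOn (by norm_num)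
  have hfC : ContDiffOn ℝ 1 f s := hC.derivWithin hu (by norm_num)
  have hfc : ContinuousOn f s := hfC.continuousOn
  have hg0C : ContDiffOn ℝ 0 g s := hfC.derivWithin hu (by norm_num)
  have hgc : ContinuousOn g s := hg0C.continuousOn
  have hderiv_f : ∀ x ∈ Set.Ioo (0:ℝ) y₀, deriv r x = f x := fun x hx =>
    (derivWithin_of_mem_nhds (Ico_mem_nhds hx.1 hx.2)).symm
  have hderiv_g : ∀ x ∈ Set.Ioo (0:ℝ) y₀, deriv f x = g x := fun x hx =>
    (derivWithin_of_mem_nhds (Ico_mem_nhds hx.1 hx.2)).symm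
  -- ODE in product form
  have hode' : ∀ y ∈ Set.Ioo (0:ℝ) y₀,
      g y = (1 + f y ^ 2) * (((n:ℝ) - 1) / r y
        - (1 + f y ^ 2) / (lam * (r y - y * f y))) := by
    intro y hy
    have h1 : (0:ℝ) < 1 + f y ^ 2 := by positivity
    have h := hode y hy
    rw [div_eq_iff h1.ne'] at h
    rw [h]; ring
  -- sign of g at a zero of f
  have hA : ∀ y ∈ Set.Ioo (0:ℝ) y₀, f y = 0 → 0 < g y := by
    intro y hy hfy
    have hry : 0 < r y := hpos y (hsub hy)
    have hkey : g y = (lam * ((n:ℝ)-1) - 1) / (lam * r y) := by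
      rw [hode' y hy, hfy]
      field_simp
      ring_nf; rw [mul_inv_cancel₀ hry.ne']; ring
    rw [hkey]
    exact div_pos (by linarith) (by positivity)
  set M₁ : ℝ := Real.sqrt (lam * ((n:ℝ)-1) - 1) with hM
  have hM1pos : 0 < M₁ := Real.sqrt_pos.mpr (by linarith)
  have hM1sq : 1 + M₁ ^ 2 = lam * ((n:ℝ)-1) := by
    rw [hM, Real.sq_sqrt (by linarith)]; ring
  -- sign of g where f = M₁
  have hB : ∀ y ∈ Set.Ioo (0:ℝ) y₀, f y = M₁ → g y < 0 := by
    intro y hy hfy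
    have hry : 0 < r y := hpos y (hsub hy)
    have hden : 0 < r y - y * M₁ := by
      have := hstruct y (hsub hy); rw [hfy] at this; linarith
    have hden' : r y - y * M₁ < r y := by nlinarith [hy.1, hM1pos]
    have hkey : g y = (lam * ((n:ℝ)-1)) *
        (((n:ℝ)-1) / r y - ((n:ℝ)-1) / (r y - y * M₁)) := by
      rw [hode' y hy, hfy, hM1sq]
      field_simp
    rw [hkey]
    apply mul_neg_of_pos_of_neg (by linarith)
    have := div_lt_div_of_pos_left hc hden hden'
    linarith
  -- strict monotonicity steps
  have hstep : ∀ l a : ℝ, 0 ≤ l → l < a → a < y₀ →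
      (∀ x ∈ Set.Ioo l a, 0 < g x) → f l < f a := by
    intro l a hl hla hay hgpos
    have hIccs : Set.Icc l a ⊆ s := fun x hx =>
      ⟨le_trans hl hx.1, lt_of_le_of_lt hx.2 hay⟩
    have hm := strictMonoOn_of_deriv_pos (convex_Icc l a) (hfc.mono hIccs)
      (fun x hx => by
        rw [interior_Icc] at hx
        have hxI : x ∈ Set.Ioo (0:ℝ) y₀ := ⟨lt_of_le_of_lt hl hx.1, lt_trans hx.2 hay⟩
        rw [hderiv_g x hxI]
        exact hgpos x hx)
    exact hm (left_mem_Icc.mpr hla.le) (right_mem_Icc.mpr hla.le) hla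
  have hstep' : ∀ l a : ℝ, 0 ≤ l → l < a → a < y₀ →
      (∀ x ∈ Set.Ioo l a, g x < 0) → f a < f l := by
    intro l a hl hla hay hgneg
    have hIccs : Set.Icc l a ⊆ s := fun x hx =>
      ⟨le_trans hl hx.1, lt_of_le_of_lt hx.2 hay⟩
    have hm := strictAntiOn_of_deriv_neg (convex_Icc l a) (hfc.mono hIccs)
      (fun x hx => by
        rw [interior_Icc] at hx
        have hxI : x ∈ Set.Ioo (0:ℝ) y₀ := ⟨lt_of_le_of_lt hl hx.1, lt_trans hx.2 hay⟩
        rw [hderiv_g x hxI]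
        exact hgneg x hx)
    exact hm (left_mem_Icc.mpr hla.le) (right_mem_Icc.mpr hla.le) hla
  -- positivity/negativity of g on a neighborhood
  have hposnbhd : ∀ a ∈ s, 0 < g a → ∃ δ > 0, ∀ y ∈ s, |y - a| < δ → 0 < g y := by
    intro a ha hga
    have h := (hgc a ha).tendsto.eventually (eventually_gt_nhds hga)
    rw [eventually_nhdsWithin_iff, Metric.eventually_nhds_iff] at h
    obtain ⟨δ, hδ, h⟩ := h
    exact ⟨δ, hδ, fun y hy hd => h (by rwa [Real.dist_eq]) hy⟩
  have hnegnbhd : ∀ a ∈ s, g a < 0 → ∃ δ > 0, ∀ y ∈ s, |y - a| < δ → g y < 0 := by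
    intro a ha hga
    have h := (hgc a ha).tendsto.eventually (eventually_lt_nhds hga)
    rw [eventually_nhdsWithin_iff, Metric.eventually_nhds_iff] at h
    obtain ⟨δ, hδ, h⟩ := h
    exact ⟨δ, hδ, fun y hy hd => h (by rwa [Real.dist_eq]) hy⟩
  -- one-sided limits of f at a from the left
  have hlimle : ∀ a ∈ s, 0 < a → ∀ K : ℝ, (∀ y ∈ Set.Ioo (0:ℝ) a, f y ≤ K) → f a ≤ K := by
    intro a ha ha0 K hK
    have hne : (𝓝[Set.Ioo (0:ℝ) a] a).NeBot := by
      apply mem_closure_iff_nhdsWithin_neBot.mp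
      rw [closure_Ioo ha0.ne]
      exact ⟨ha0.le, le_refl a⟩
    have hsub2 : Set.Ioo (0:ℝ) a ⊆ s := fun y hy => ⟨hy.1.le, lt_trans hy.2 ha.2⟩
    have ht : Tendsto f (𝓝[Set.Ioo (0:ℝ) a] a) (𝓝 (f a)) :=
      (hfc a ha).tendsto.mono_left (nhdsWithin_mono a hsub2)
    exact le_of_tendsto ht (eventually_mem_nhdsWithin.mono fun y hy => hK y hy)
  have hlimge : ∀ a ∈ s, 0 < a → ∀ K : ℝ, (∀ y ∈ Set.Ioo (0:ℝ) a, K ≤ f y) → K ≤ f a := by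
    intro a ha ha0 K hK
    have hne : (𝓝[Set.Ioo (0:ℝ) a] a).NeBot := by
      apply mem_closure_iff_nhdsWithin_neBot.mp
      rw [closure_Ioo ha0.ne]
      exact ⟨ha0.le, le_refl a⟩
    have hsub2 : Set.Ioo (0:ℝ) a ⊆ s := fun y hy => ⟨hy.1.le, lt_trans hy.2 ha.2⟩
    have ht : Tendsto f (𝓝[Set.Ioo (0:ℝ) a] a) (𝓝 (f a)) :=
      (hfc a ha).tendsto.mono_left (nhdsWithin_mono a hsub2)
    exact ge_of_tendsto ht (eventually_mem_nhdsWithin.mono fun y hy => hK y hy)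
  -- g 0 > 0 via the limit of the ODE
  have hg0pos : 0 < g 0 := by
    have hL : (𝓝[Set.Ioo (0:ℝ) y₀] (0:ℝ)).NeBot := by
      apply mem_closure_iff_nhdsWithin_neBot.mp
      rw [closure_Ioo hy₀.ne]
      exact ⟨le_refl 0, hy₀.le⟩
    have hmonoL : 𝓝[Set.Ioo (0:ℝ) y₀] (0:ℝ) ≤ 𝓝[s] 0 := nhdsWithin_mono 0 hsub
    have htr : Tendsto r (𝓝[Set.Ioo (0:ℝ) y₀] (0:ℝ)) (𝓝 mu) := by
      have h := (hrc 0 h0s).tendsto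
      rw [hr0] at h
      exact h.mono_left hmonoL
    have htf : Tendsto f (𝓝[Set.Ioo (0:ℝ) y₀] (0:ℝ)) (𝓝 0) := by
      have h := (hfc 0 h0s).tendsto
      rw [hr'0] at h
      exact h.mono_left hmonoL
    have hty : Tendsto (fun y : ℝ => y) (𝓝[Set.Ioo (0:ℝ) y₀] (0:ℝ)) (𝓝 0) :=
      (continuous_id.tendsto 0).mono_left nhdsWithin_le_nhds
    have h1 : Tendsto (fun y => 1 + f y ^ 2) (𝓝[Set.Ioo (0:ℝ) y₀] (0:ℝ))
        (𝓝 (1 + (0:ℝ) ^ 2)) := tendsto_const_nhds.add (htf.pow 2)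
    have h2 : Tendsto (fun y => lam * (r y - y * f y)) (𝓝[Set.Ioo (0:ℝ) y₀] (0:ℝ))
        (𝓝 (lam * (mu - 0 * 0))) := tendsto_const_nhds.mul (htr.sub (hty.mul htf))
    have htF : Tendsto (fun y => (1 + f y ^ 2) * (((n:ℝ)-1) / r y
        - (1 + f y ^ 2) / (lam * (r y - y * f y)))) (𝓝[Set.Ioo (0:ℝ) y₀] (0:ℝ))
        (𝓝 ((1 + (0:ℝ) ^ 2) * (((n:ℝ)-1) / mu
          - (1 + (0:ℝ) ^ 2) / (lam * (mu - 0 * 0))))) := by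
      refine h1.mul (Tendsto.sub (tendsto_const_nhds.div htr hmu.ne')
        (h1.div h2 ?_))
      have : lam * (mu - 0 * 0) = lam * mu := by ring
      rw [this]
      exact (mul_pos hlam0 hmu).ne'
    have hgt : Tendsto g (𝓝[Set.Ioo (0:ℝ) y₀] (0:ℝ))
        (𝓝 ((1 + (0:ℝ) ^ 2) * (((n:ℝ)-1) / mu
          - (1 + (0:ℝ) ^ 2) / (lam * (mu - 0 * 0))))) :=
      htF.congr' (eventually_mem_nhdsWithin.mono fun y hy => (hode' y hy).symm)
    have hgt' : Tendsto g (𝓝[Set.Ioo (0:ℝ) y₀] (0:ℝ)) (𝓝 (g 0)) :=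
      (hgc 0 h0s).tendsto.mono_left hmonoL
    have heq : g 0 = (1 + (0:ℝ) ^ 2) * (((n:ℝ)-1) / mu
        - (1 + (0:ℝ) ^ 2) / (lam * (mu - 0 * 0))) := tendsto_nhds_unique hgt' hgt
    have hval : (1 + (0:ℝ) ^ 2) * (((n:ℝ)-1) / mu
        - (1 + (0:ℝ) ^ 2) / (lam * (mu - 0 * 0)))
        = (lam * ((n:ℝ)-1) - 1) / (lam * mu) := by
      field_simp
      ring_nf; rw [mul_inv_cancel₀ hmu.ne']; ring
    rw [heq, hval]
    exact div_pos (by linarith) (by positivity)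
  -- Step 1: f > 0 on a small right neighborhood of 0
  have hstep1 : ∃ d, 0 < d ∧ d < y₀ ∧ ∀ y ∈ Set.Ioc (0:ℝ) d, 0 < f y := by
    obtain ⟨δ, hδ, hδpos⟩ := hposnbhd 0 h0s hg0pos
    set d := min (δ/2) (y₀/2) with hd
    have hd0 : 0 < d := by positivity
    have hdy : d < y₀ := lt_of_le_of_lt (min_le_right _ _) (by linarith)
    refine ⟨d, hd0, hdy, fun y hy => ?_⟩
    have h1 : f 0 < f y := by
      apply hstep 0 y le_rfl hy.1 (lt_of_le_of_lt hy.2 hdy)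
      intro x hx
      apply hδpos x ⟨hx.1.le, lt_trans (lt_of_lt_of_le hx.2 hy.2) hdy⟩
      rw [sub_zero, abs_of_pos hx.1]
      calc x < y := hx.2
        _ ≤ d := hy.2
        _ ≤ δ/2 := min_le_left _ _
        _ < δ := by linarith
    rwa [hr'0] at h1
  obtain ⟨d, hd0, hdy, hdpos⟩ := hstep1
  -- Main positivity
  have hfpos : ∀ y ∈ Set.Ioo (0:ℝ) y₀, 0 < f y := by
    by_contra hcon
    push_neg at hcon
    obtain ⟨b, hb, hfb⟩ := hcon
    by_cases hdb : b ≤ d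
    · exact absurd (hdpos b ⟨hb.1, hdb⟩) (not_lt.mpr hfb)
    push_neg at hdb
    set S := {y ∈ Set.Icc d b | f y ≤ 0} with hS
    have hIccs : Set.Icc d b ⊆ s := fun x hx =>
      ⟨le_trans hd0.le hx.1, lt_of_le_of_lt hx.2 hb.2⟩
    have hScl : IsClosed S :=
      ContinuousOn.preimage_isClosed_of_isClosed (hfc.mono hIccs) isClosed_Icc isClosed_Iic
    have hbS : b ∈ S := ⟨⟨hdb.le, le_refl b⟩, hfb⟩
    have hSbdd : BddBelow S := ⟨d, fun y hy => hy.1.1⟩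
    set a := sInf S with ha
    have haS : a ∈ S := hScl.csInf_mem ⟨b, hbS⟩ hSbdd
    have hfa : f a ≤ 0 := haS.2
    have hda : d < a := by
      rcases lt_or_eq_of_le haS.1.1 with h | h
      · exact h
      · exfalso
        rw [← h] at hfa
        exact absurd (hdpos d ⟨hd0, le_refl d⟩) (not_lt.mpr hfa)
    have hfltA : ∀ y ∈ Set.Ioo (0:ℝ) a, 0 < f y := by
      intro y hy
      by_cases hyd : y ≤ d
      · exact hdpos y ⟨hy.1, hyd⟩
      · push_neg at hyd
        by_contra hneg
        push_neg at hneg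
        have hyS : y ∈ S := ⟨⟨hyd.le, le_trans hy.2.le haS.1.2⟩, hneg⟩
        exact absurd (csInf_le hSbdd hyS) (not_le.mpr hy.2)
    have haI : a ∈ Set.Ioo (0:ℝ) y₀ :=
      ⟨lt_trans hd0 hda, lt_of_le_of_lt haS.1.2 hb.2⟩
    have hfa0 : f a = 0 :=
      le_antisymm hfa (hlimge a (hsub haI) haI.1 0 fun y hy => (hfltA y hy).le)
    have hga : 0 < g a := hA a haI hfa0
    obtain ⟨δ, hδ, hδpos⟩ := hposnbhd a (hsub haI) hga
    set l := max d (a - δ/2) with hl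
    have hla : l < a := max_lt hda (by linarith)
    have hdl : d ≤ l := le_max_left _ _
    have hflfa : f l < f a := by
      apply hstep l a (le_trans hd0.le hdl) hla haI.2
      intro x hx
      apply hδpos x ⟨le_trans (le_trans hd0.le hdl) hx.1.le, lt_trans hx.2 haI.2⟩
      rw [abs_sub_lt_iff]
      constructor
      · linarith [hx.2]
      · have : a - δ/2 ≤ l := le_max_right _ _
        linarith [hx.1]
    have hfl : 0 < f l := hfltA l ⟨lt_of_lt_of_le hd0 hdl, hla⟩
    rw [hfa0] at hflfa
    linarith
  -- Upper bound on f
  have hfub : ∀ y ∈ Set.Ioo (0:ℝ) y₀, f y < M₁ := by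
    by_contra hcon
    push_neg at hcon
    obtain ⟨b, hb, hfb⟩ := hcon
    set S := {y ∈ Set.Icc 0 b | M₁ ≤ f y} with hS
    have hIccs : Set.Icc 0 b ⊆ s := fun x hx => ⟨hx.1, lt_of_le_of_lt hx.2 hb.2⟩
    have hScl : IsClosed S :=
      ContinuousOn.preimage_isClosed_of_isClosed (hfc.mono hIccs) isClosed_Icc isClosed_Ici
    have hbS : b ∈ S := ⟨⟨hb.1.le, le_refl b⟩, hfb⟩
    have hSbdd : BddBelow S := ⟨0, fun y hy => hy.1.1⟩
    set a := sInf S with ha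
    have haS : a ∈ S := hScl.csInf_mem ⟨b, hbS⟩ hSbdd
    have hfa : M₁ ≤ f a := haS.2
    have ha0 : 0 < a := by
      rcases lt_or_eq_of_le haS.1.1 with h | h
      · exact h
      · exfalso
        rw [← h, hr'0] at hfa
        linarith
    have hfltA : ∀ y ∈ Set.Ioo (0:ℝ) a, f y < M₁ := by
      intro y hy
      by_contra hneg
      push_neg at hneg
      have hyS : y ∈ S := ⟨⟨hy.1.le, le_trans hy.2.le haS.1.2⟩, hneg⟩
      exact absurd (csInf_le hSbdd hyS) (not_le.mpr hy.2)
    have haI : a ∈ Set.Ioo (0:ℝ) y₀ := ⟨ha0, lt_of_le_of_lt haS.1.2 hb.2⟩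
    have hfa0 : f a = M₁ :=
      le_antisymm (hlimle a (hsub haI) ha0 M₁ fun y hy => (hfltA y hy).le) hfa
    have hga : g a < 0 := hB a haI hfa0
    obtain ⟨δ, hδ, hδneg⟩ := hnegnbhd a (hsub haI) hga
    set l := max (a/2) (a - δ/2) with hl
    have hla : l < a := max_lt (by linarith) (by linarith)
    have hl0 : 0 < l := lt_of_lt_of_le (by linarith) (le_max_left _ _)
    have hfafl : f a < f l := by
      apply hstep' l a hl0.le hla haI.2
      intro x hx
      apply hδneg x ⟨le_trans hl0.le hx.1.le, lt_trans hx.2 haI.2⟩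
      rw [abs_sub_lt_iff]
      constructor
      · linarith [hx.2]
      · have : a - δ/2 ≤ l := le_max_right _ _
        linarith [hx.1]
    have hfl : f l < M₁ := hfltA l ⟨hl0, hla⟩
    rw [hfa0] at hfafl
    linarith
  -- bounds on r
  have hintIco : interior s = Set.Ioo (0:ℝ) y₀ := interior_Ico
  have hrmono : MonotoneOn r s := by
    apply monotoneOn_of_deriv_nonneg (convex_Ico 0 y₀) hrc
    · rw [hintIco]
      exact fun x hx => (hrd x (hsub hx)).mono hsub
    · intro x hx
      rw [hintIco] at hx
      rw [hderiv_f x hx]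
      exact (hfpos x hx).le
  have hG : MonotoneOn (fun y => mu + M₁ * y - r y) s := by
    apply monotoneOn_of_deriv_nonneg (convex_Ico 0 y₀)
    · exact ((continuous_const.add (continuous_const.mul continuous_id)).continuousOn).sub hrc
    · rw [hintIco]
      intro x hx
      have hdr : DifferentiableAt ℝ r x :=
        (hrd x (hsub hx)).differentiableAt (Ico_mem_nhds hx.1 hx.2)
      exact (((differentiable_const mu).add
        ((differentiable_const M₁).mul differentiable_id)).differentiableAt.sub
        hdr).differentiableWithinAt
    · intro x hx
      rw [hintIco] at hx
      have hdr : HasDerivAt r (f x) x := by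
        have h := ((hrd x (hsub hx)).differentiableAt (Ico_mem_nhds hx.1 hx.2)).hasDerivAt
        rwa [hderiv_f x hx] at h
      have hGd : HasDerivAt (fun y => mu + M₁ * y - r y) (M₁ - f x) x := by
        have h1 : HasDerivAt (fun y : ℝ => mu + M₁ * y) M₁ x := by
          simpa using ((hasDerivAt_id x).const_mul M₁).const_add mu
        exact h1.sub hdr
      rw [hGd.deriv]
      linarith [hfub x hx]
  refine ⟨M₁, hM1pos, fun y hy => ⟨hfpos y hy, (hfub y hy).le⟩, fun y hy => ⟨?_, ?_⟩⟩
  · have := hrmono h0s (hsub hy) hy.1.le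
    rwa [hr0] at this
  · have h := hG h0s (hsub hy) hy.1.le
    simp only [hr0] at h
    have h' : mu + M₁ * 0 - mu ≤ mu + M₁ * y - r y := h
    have : r y ≤ mu + M₁ * y := by linarith
    have hyy : M₁ * y ≤ M₁ * y₀ := by nlinarith [hy.2, hM1pos]
    linarith
end

section
/- Let n ≥ 2 be an integer, λ > 1/(n-1), μ > 0 and y₀ > 0. Suppose r : [0, y₀) → ℝ is twice continuously differentiable with r(y) > 0 and r(y) > y·r'(y) for all 0 ≤ y < y₀, r(0) = μ, r'(0) = 0, and r''(y)/(1 + r'(y)²) = (n-1)/r(y) − (1 + r'(y)²)/(λ(r(y) − y·r'(y))) holds for all 0 < y < y₀. Then arctan(r'(y)) ≤ (n-1)·y₀/μ for all 0 < y < y₀; in particular r'(y) ≤ tan((n-1)·y₀/μ) for all 0 < y < y₀ whenever (n-1)·y₀/μ < π/2. -/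
open Topology Filter

/-- A gradient bound for the solution of the inverse mean curvature flow
soliton ODE on `[0, y₀)` with `λ > 1/(n-1)`:
`arctan (r'(y)) ≤ (n-1) y₀ / μ`, and hence `r'(y) ≤ tan ((n-1) y₀ / μ)`
whenever `(n-1) y₀ / μ < π/2`. -/
theorem arctan_deriv_bound (n : ℕ) (hn : 2 ≤ n) (lam : ℝ)
    (hlam : 1 / ((n : ℝ) - 1) < lam)
    (mu : ℝ) (hmu : 0 < mu) (y₀ : ℝ) (hy₀ : 0 < y₀)
    (r : ℝ → ℝ) (hC : ContDiffOn ℝ 2 r (Set.Ico 0 y₀))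
    (hpos : ∀ y ∈ Set.Ico (0 : ℝ) y₀, 0 < r y)
    (hstruct : ∀ y ∈ Set.Ico (0 : ℝ) y₀,
      y * derivWithin r (Set.Ico 0 y₀) y < r y)
    (hr0 : r 0 = mu)
    (hr'0 : derivWithin r (Set.Ico 0 y₀) 0 = 0)
    (hode : ∀ y ∈ Set.Ioo (0 : ℝ) y₀,
      derivWithin (derivWithin r (Set.Ico 0 y₀)) (Set.Ico 0 y₀) y /
          (1 + (derivWithin r (Set.Ico 0 y₀) y) ^ 2) =
        ((n : ℝ) - 1) / r y -
          (1 + (derivWithin r (Set.Ico 0 y₀) y) ^ 2) /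
            (lam * (r y - y * derivWithin r (Set.Ico 0 y₀) y))) :
    (∀ y ∈ Set.Ioo (0 : ℝ) y₀,
      Real.arctan (derivWithin r (Set.Ico 0 y₀) y) ≤ ((n : ℝ) - 1) * y₀ / mu) ∧
    (((n : ℝ) - 1) * y₀ / mu < Real.pi / 2 →
      ∀ y ∈ Set.Ioo (0 : ℝ) y₀,
        derivWithin r (Set.Ico 0 y₀) y ≤ Real.tan (((n : ℝ) - 1) * y₀ / mu)) := by
  set s : Set ℝ := Set.Ico 0 y₀ with hs
  set g : ℝ → ℝ := derivWithin r s with hgdef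
  have hn1 : (1:ℝ) ≤ (n:ℝ) - 1 := by
    have : (2:ℝ) ≤ (n:ℝ) := by exact_mod_cast hn
    linarith
  have hlam0 : 0 < lam := lt_trans (by positivity) hlam
  have hnl : 1 < ((n:ℝ) - 1) * lam := by
    rw [div_lt_iff₀ (by linarith : (0:ℝ) < (n:ℝ) - 1)] at hlam
    linarith [hlam]
  have hu : UniqueDiffOn ℝ s := uniqueDiffOn_Ico 0 y₀
  have hgC : ContDiffOn ℝ 1 g s := hC.derivWithin hu (by norm_num)
  have hgcont : ContinuousOn g s := hgC.continuousOn
  have hgdiff : DifferentiableOn ℝ g s := hgC.differentiableOn (by norm_num)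
  have hrcont : ContinuousOn r s := hC.continuousOn
  have hmem : ∀ y ∈ Set.Ioo (0:ℝ) y₀, s ∈ 𝓝 y := fun y hy => Ico_mem_nhds hy.1 hy.2
  have hIoo_sub : Set.Ioo (0:ℝ) y₀ ⊆ s := Set.Ioo_subset_Ico_self
  have hgderiv : ∀ y ∈ Set.Ioo (0:ℝ) y₀, HasDerivAt g (derivWithin g s y) y := by
    intro y hy
    have h1 : DifferentiableAt ℝ g y := (hgdiff y (hIoo_sub hy)).differentiableAt (hmem y hy)
    rw [derivWithin_of_mem_nhds (hmem y hy)]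
    exact h1.hasDerivAt
  set F : ℝ → ℝ := fun y =>
    (1 + g y ^ 2) * (((n:ℝ) - 1) / r y - (1 + g y ^ 2) / (lam * (r y - y * g y))) with hF
  have hode' : ∀ y ∈ Set.Ioo (0:ℝ) y₀, derivWithin g s y = F y := by
    intro y hy
    have h1 : (0:ℝ) < 1 + g y ^ 2 := by positivity
    have h2 := hode y hy
    rw [div_eq_iff h1.ne'] at h2
    rw [h2, hF]
    ring
  have hFcont : ContinuousOn F s := by
    rw [hF]
    apply ContinuousOn.mul
    · exact continuousOn_const.add (hgcont.pow 2)
    · apply ContinuousOn.sub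
      · exact continuousOn_const.div hrcont fun y hy => (hpos y hy).ne'
      · exact (continuousOn_const.add (hgcont.pow 2)).div
          (continuousOn_const.mul (hrcont.sub (continuousOn_id.mul hgcont)))
          fun y hy => (mul_pos hlam0 (sub_pos.2 (hstruct y hy))).ne'
  have hFpos : ∀ y ∈ s, g y = 0 → 0 < F y := by
    intro y hy h0
    have hR : 0 < r y := hpos y hy
    rw [hF]
    simp only [h0]
    have h2 : 1 / (lam * (r y - y * 0)) < ((n:ℝ) - 1) / r y := by
      rw [div_lt_div_iff₀ (by simpa using mul_pos hlam0 hR) hR]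
      nlinarith
    nlinarith [h2]
  have hg0 : g 0 = 0 := hr'0
  -- g is nonnegative on s
  have hgnonneg : ∀ y ∈ s, 0 ≤ g y := by
    by_contra hcon
    push_neg at hcon
    obtain ⟨y₁, hy₁s, hy₁⟩ := hcon
    have hy₁0 : 0 < y₁ := by
      rcases eq_or_lt_of_le hy₁s.1 with h | h
      · exfalso; rw [← h, hg0] at hy₁; exact lt_irrefl 0 hy₁
      · exact h
    have hIcc_sub : Set.Icc 0 y₁ ⊆ s := fun z hz => ⟨hz.1, lt_of_le_of_lt hz.2 hy₁s.2⟩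
    set T : Set ℝ := Set.Icc 0 y₁ ∩ g ⁻¹' Set.Ici 0 with hT
    have hTne : T.Nonempty := ⟨0, ⟨le_rfl, hy₁0.le⟩, hg0.ge⟩
    have hTclosed : IsClosed T :=
      (hgcont.mono hIcc_sub).preimage_isClosed_of_isClosed isClosed_Icc isClosed_Ici
    have hbdd : BddAbove T := (isCompact_Icc.bddAbove).mono Set.inter_subset_left
    set s0 : ℝ := sSup T with hs0def
    have hs0T : s0 ∈ T := hTclosed.csSup_mem hTne hbdd
    have hs00 : 0 ≤ s0 := hs0T.1.1
    have hs0le : s0 ≤ y₁ := hs0T.1.2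
    have hs0lt : s0 < y₁ := by
      rcases eq_or_lt_of_le hs0le with h | h
      · exfalso
        have := hs0T.2
        rw [h] at this
        exact absurd this (not_le.2 hy₁)
      · exact h
    have hneg : ∀ z, s0 < z → z ≤ y₁ → g z < 0 := by
      intro z h1 h2
      by_contra h
      push_neg at h
      have hzT : z ∈ T := ⟨⟨le_trans hs00 h1.le, h2⟩, h⟩
      exact absurd (le_csSup hbdd hzT) (not_le.2 h1)
    have hgs0 : g s0 = 0 := by
      refine le_antisymm ?_ hs0T.2
      have hcw : ContinuousWithinAt g (Set.Ioc s0 y₁) s0 :=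
        ((hgcont.mono hIcc_sub) s0 ⟨hs00, hs0le⟩).mono
          (fun z hz => ⟨le_trans hs00 hz.1.le, hz.2⟩)
      haveI : (𝓝[Set.Ioc s0 y₁] s0).NeBot := by
        apply mem_closure_iff_nhdsWithin_neBot.1
        rw [closure_Ioc hs0lt.ne]
        exact ⟨le_rfl, hs0lt.le⟩
      exact le_of_tendsto hcw
        (Filter.eventually_of_mem self_mem_nhdsWithin fun z hz => (hneg z hz.1 hz.2).le)
    have hs0s : s0 ∈ s := ⟨hs00, lt_of_le_of_lt hs0le hy₁s.2⟩
    have hFs0 : 0 < F s0 := hFpos s0 hs0s hgs0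
    have hev : ∀ᶠ z in 𝓝[s] s0, 0 < F z := (hFcont s0 hs0s).eventually (eventually_gt_nhds hFs0)
    obtain ⟨δ, hδ, hball⟩ := Metric.mem_nhdsWithin_iff.1 hev
    set t : ℝ := min (s0 + δ / 2) y₁ with ht
    have hts0 : s0 < t := lt_min (by linarith) hs0lt
    have hty₁ : t ≤ y₁ := min_le_right _ _
    have hIcc2 : Set.Icc s0 t ⊆ s := fun z hz =>
      ⟨le_trans hs00 hz.1, lt_of_le_of_lt (le_trans hz.2 hty₁) hy₁s.2⟩
    have hmono : StrictMonoOn g (Set.Icc s0 t) := by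
      apply strictMonoOn_of_deriv_pos (convex_Icc s0 t) (hgcont.mono hIcc2)
      intro x hx
      rw [interior_Icc] at hx
      have hx' : x ∈ Set.Ioo (0:ℝ) y₀ :=
        ⟨lt_of_le_of_lt hs00 hx.1, lt_of_lt_of_le hx.2 (le_trans hty₁ hy₁s.2.le)⟩
      rw [← derivWithin_of_mem_nhds (hmem x hx'), hode' x hx']
      refine hball ⟨Metric.mem_ball.2 ?_, hIoo_sub hx'⟩
      calc dist x s0 = x - s0 := by
            rw [Real.dist_eq, abs_of_pos (by linarith [hx.1])]
        _ < δ := by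
            have : x < s0 + δ / 2 := lt_of_lt_of_le hx.2 (min_le_left _ _)
            linarith
    have hgt : 0 < g t := by
      have := hmono ⟨le_rfl, hts0.le⟩ ⟨hts0.le, le_rfl⟩ hts0
      rw [hgs0] at this
      exact this
    exact absurd hgt (not_lt.2 (hneg t hts0 hty₁).le)
  -- r is monotone, hence r ≥ mu
  have hrmono : MonotoneOn r s := by
    apply monotoneOn_of_deriv_nonneg (convex_Ico 0 y₀) hrcont
    · rw [interior_Ico]
      exact (hC.differentiableOn (by norm_num)).mono Set.Ioo_subset_Ico_self
    · intro x hx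
      rw [interior_Ico] at hx
      rw [← derivWithin_of_mem_nhds (hmem x hx)]
      exact hgnonneg x (hIoo_sub hx)
  have hrmu : ∀ y ∈ s, mu ≤ r y := by
    intro y hy
    rw [← hr0]
    exact hrmono ⟨le_rfl, hy₀⟩ hy hy.1
  -- main arctan bound
  have main : ∀ y ∈ Set.Ioo (0:ℝ) y₀, Real.arctan (g y) ≤ ((n:ℝ) - 1) * y₀ / mu := by
    intro y hy
    set φ : ℝ → ℝ := fun t => Real.arctan (g t) with hφ
    set φ' : ℝ → ℝ := fun t => 1 / (1 + g t ^ 2) * derivWithin g s t with hφ'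
    have hsubIcc : Set.Icc 0 y ⊆ s := fun z hz => ⟨hz.1, lt_of_le_of_lt hz.2 hy.2⟩
    have hφcont : ContinuousOn φ (Set.Icc 0 y) :=
      Real.continuous_arctan.comp_continuousOn (hgcont.mono hsubIcc)
    have hφderiv : ∀ t ∈ Set.Ioo (0:ℝ) y, HasDerivAt φ (φ' t) t := by
      intro t ht
      have ht' : t ∈ Set.Ioo (0:ℝ) y₀ := ⟨ht.1, lt_trans ht.2 hy.2⟩
      exact (Real.hasDerivAt_arctan (g t)).comp t (hgderiv t ht')
    obtain ⟨c, hc, hceq⟩ := exists_hasDerivAt_eq_slope φ φ' hy.1 hφcont hφderiv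
    have hc' : c ∈ Set.Ioo (0:ℝ) y₀ := ⟨hc.1, lt_trans hc.2 hy.2⟩
    have hφ0 : φ 0 = 0 := by rw [hφ]; simp [hg0]
    have hslope : φ y = φ' c * y := by
      have hy0 : y ≠ 0 := hy.1.ne'
      rw [hφ0, sub_zero, sub_zero] at hceq
      rw [hceq, div_mul_cancel₀ _ hy0]
    -- bound φ' c
    have hbound : φ' c ≤ ((n:ℝ) - 1) / mu := by
      have hode2 := hode c hc'
      have h1 : (0:ℝ) < 1 + g c ^ 2 := by positivity
      have hQ : 0 ≤ (1 + g c ^ 2) / (lam * (r c - c * g c)) := by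
        have hden : 0 < lam * (r c - c * g c) :=
          mul_pos hlam0 (sub_pos.2 (hstruct c (hIoo_sub hc')))
        positivity
      have hφ'c : φ' c = derivWithin g s c / (1 + g c ^ 2) := by
        rw [hφ']; ring
      rw [hφ'c, hode2]
      have h2 : ((n:ℝ) - 1) / r c ≤ ((n:ℝ) - 1) / mu := by
        have hrc : 0 < r c := hpos c (hIoo_sub hc')
        rw [div_le_div_iff₀ hrc hmu]
        nlinarith [hrmu c (hIoo_sub hc')]
      linarith
    have hstep : φ y ≤ ((n:ℝ) - 1) / mu * y := by
      rw [hslope]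
      have hφ'mul : φ' c * y ≤ ((n:ℝ) - 1) / mu * y :=
        mul_le_mul_of_nonneg_right hbound hy.1.le
      linarith
    have hyle : ((n:ℝ) - 1) / mu * y ≤ ((n:ℝ) - 1) / mu * y₀ := by
      have : (0:ℝ) ≤ ((n:ℝ) - 1) / mu := by positivity
      exact mul_le_mul_of_nonneg_left hy.2.le this
    calc Real.arctan (g y) = φ y := rfl
      _ ≤ ((n:ℝ) - 1) / mu * y := hstep
      _ ≤ ((n:ℝ) - 1) / mu * y₀ := hyle
      _ = ((n:ℝ) - 1) * y₀ / mu := by ring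
  refine ⟨main, ?_⟩
  intro hB y hy
  have h1 := main y hy
  have h2 : -(Real.pi / 2) < Real.arctan (g y) := Real.neg_pi_div_two_lt_arctan _
  rcases eq_or_lt_of_le h1 with h | h
  · rw [← h, Real.tan_arctan]
  · have := Real.tan_lt_tan_of_lt_of_lt_pi_div_two h2 hB h
    rw [Real.tan_arctan] at this
    exact this.le
end

section
/- Let n ≥ 2 be an integer, λ > 1/(n-1), μ > 0 and y₀ > 0. Suppose r : [0, y₀) → ℝ is twice continuously differentiable with r(y) > 0 and r(y) > y·r'(y) for all 0 ≤ y < y₀, r(0) = μ, r'(0) = 0, and r''(y)/(1 + r'(y)²) = (n-1)/r(y) − (1 + r'(y)²)/(λ(r(y) − y·r'(y))) holds for all 0 < y < y₀. Then either r''(y) > 0 for all 0 < y < y₀, or there exists a constant y₁ ∈ (0, y₀) such that r''(y₁) = 0, r''(y) > 0 for all 0 < y < y₁, and r''(y) < 0 for all y₁ < y < y₀. -/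
open Set Filter

set_option maxHeartbeats 1000000 in
/-- Dichotomy on the sign of the second derivative of the solution of the
inverse mean curvature flow soliton ODE on `[0, y₀)` with `λ > 1/(n-1)`:
either `r'' > 0` on all of `(0, y₀)`, or `r''` changes sign exactly once,
from positive to negative. -/
theorem second_deriv_sign_dichotomy (n : ℕ) (hn : 2 ≤ n) (lam : ℝ)
    (hlam : 1 / ((n : ℝ) - 1) < lam)
    (mu : ℝ) (hmu : 0 < mu) (y₀ : ℝ) (hy₀ : 0 < y₀)
    (r : ℝ → ℝ) (hC : ContDiffOn ℝ 2 r (Set.Ico 0 y₀))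
    (hpos : ∀ y ∈ Set.Ico (0 : ℝ) y₀, 0 < r y)
    (hstruct : ∀ y ∈ Set.Ico (0 : ℝ) y₀,
      y * derivWithin r (Set.Ico 0 y₀) y < r y)
    (hr0 : r 0 = mu)
    (hr'0 : derivWithin r (Set.Ico 0 y₀) 0 = 0)
    (hode : ∀ y ∈ Set.Ioo (0 : ℝ) y₀,
      derivWithin (derivWithin r (Set.Ico 0 y₀)) (Set.Ico 0 y₀) y /
          (1 + (derivWithin r (Set.Ico 0 y₀) y) ^ 2) =
        ((n : ℝ) - 1) / r y -
          (1 + (derivWithin r (Set.Ico 0 y₀) y) ^ 2) /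
            (lam * (r y - y * derivWithin r (Set.Ico 0 y₀) y))) :
    (∀ y ∈ Set.Ioo (0 : ℝ) y₀,
      0 < derivWithin (derivWithin r (Set.Ico 0 y₀)) (Set.Ico 0 y₀) y) ∨
    (∃ y₁ ∈ Set.Ioo (0 : ℝ) y₀,
      derivWithin (derivWithin r (Set.Ico 0 y₀)) (Set.Ico 0 y₀) y₁ = 0 ∧
      (∀ y ∈ Set.Ioo (0 : ℝ) y₁,
        0 < derivWithin (derivWithin r (Set.Ico 0 y₀)) (Set.Ico 0 y₀) y) ∧
      (∀ y ∈ Set.Ioo y₁ y₀,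
        derivWithin (derivWithin r (Set.Ico 0 y₀)) (Set.Ico 0 y₀) y < 0)) := by
  set S := Set.Ico (0 : ℝ) y₀ with hSdef
  set u := derivWithin r S with hudef
  set f := derivWithin u S with hfdef
  have hn1 : (1 : ℝ) ≤ (n : ℝ) - 1 := by
    have : (2 : ℝ) ≤ (n : ℝ) := by exact_mod_cast hn
    linarith
  have hn1pos : (0 : ℝ) < (n : ℝ) - 1 := by linarith
  have hlam1 : 1 < lam * ((n : ℝ) - 1) := by
    rw [div_lt_iff₀ hn1pos] at hlam; linarith
  have hlampos : 0 < lam := lt_trans (by positivity) hlam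
  have hUD : UniqueDiffOn ℝ S := uniqueDiffOn_Ico 0 y₀
  have hC1 : ContDiffOn ℝ 1 u S := hC.derivWithin hUD (by norm_num)
  have hu_cont : ContinuousOn u S := hC1.continuousOn
  have hr_cont : ContinuousOn r S := hC.continuousOn
  have hf_cont : ContinuousOn f S :=
    (hC1.derivWithin hUD (by norm_num : (0:WithTop ℕ∞) + 1 ≤ 1)).continuousOn
  -- derivatives at interior points
  have hder : ∀ y ∈ Set.Ioo (0 : ℝ) y₀, HasDerivAt r (u y) y ∧ HasDerivAt u (f y) y := by
    intro y hy
    have hyS : y ∈ S := ⟨hy.1.le, hy.2⟩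
    have hnh : S ∈ nhds y := Ico_mem_nhds hy.1 hy.2
    have h1 : DifferentiableAt ℝ r y :=
      ((hC y hyS).contDiffAt hnh).differentiableAt (by norm_num)
    have h2 : DifferentiableAt ℝ u y :=
      ((hC1 y hyS).contDiffAt hnh).differentiableAt (by norm_num)
    constructor
    · have := h1.hasDerivAt
      rwa [hudef, derivWithin_of_mem_nhds hnh]
    · have := h2.hasDerivAt
      rwa [hfdef, derivWithin_of_mem_nhds hnh]
  -- the key auxiliary function
  set F : ℝ → ℝ := fun y => lam * ((n : ℝ) - 1) * (r y - y * u y) - r y * (1 + (u y) ^ 2)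
    with hFdef
  have hFcont : ContinuousOn F S := by
    apply ContinuousOn.sub
    · exact continuousOn_const.mul (hr_cont.sub (continuousOn_id.mul hu_cont))
    · exact hr_cont.mul (continuousOn_const.add (hu_cont.pow 2))
  have hFder : ∀ y ∈ Set.Ioo (0 : ℝ) y₀,
      HasDerivAt F (lam * ((n : ℝ) - 1) * (-(y * f y)) -
        (u y * (1 + (u y) ^ 2) + r y * (2 * u y * f y))) y := by
    intro y hy
    obtain ⟨hr', hu'⟩ := hder y hy
    have h1 : HasDerivAt (fun x => lam * ((n : ℝ) - 1) * (r x - x * u x))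
        (lam * ((n : ℝ) - 1) * (u y - (1 * u y + y * f y))) y :=
      (hr'.sub ((hasDerivAt_id y).mul hu')).const_mul _
    have h2 : HasDerivAt (fun x => r x * (1 + (u x) ^ 2))
        (u y * (1 + (u y) ^ 2) + r y * ((2 : ℕ) * (u y) ^ 1 * f y)) y :=
      hr'.mul ((hu'.pow 2).const_add 1)
    have := h1.sub h2
    convert this using 1
    · rfl
    · rfl
    · rfl
    push_cast
    ring
  -- sign transfer from F to f
  have hsign : ∀ y ∈ Set.Ioo (0 : ℝ) y₀,
      f y = ((1 + (u y) ^ 2) / (lam * r y * (r y - y * u y))) * F y := by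
    intro y hy
    have hyS : y ∈ S := ⟨hy.1.le, hy.2⟩
    have h1 := hode y hy
    have hry := hpos y hyS
    have hv : 0 < r y - y * u y := by have := hstruct y hyS; linarith
    have h2 : (0 : ℝ) < 1 + (u y) ^ 2 := by positivity
    rw [div_eq_iff (ne_of_gt h2)] at h1
    rw [h1, hFdef]
    have hv' := hv.ne'
    field_simp
    have e : (r y - u y * y) * (r y - u y * y)⁻¹ = 1 :=
      mul_inv_cancel₀ (by rw [mul_comm]; exact hv')
    linear_combination (-(lam * ((n : ℝ) - 1))) * e
  have hkeypos : ∀ y ∈ Set.Ioo (0 : ℝ) y₀,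
      0 < (1 + (u y) ^ 2) / (lam * r y * (r y - y * u y)) := by
    intro y hy
    have hyS : y ∈ S := ⟨hy.1.le, hy.2⟩
    have hry := hpos y hyS
    have hv : 0 < r y - y * u y := by have := hstruct y hyS; linarith
    positivity
  have hFpos : ∀ y ∈ Set.Ioo (0 : ℝ) y₀, 0 < F y → 0 < f y := by
    intro y hy h
    rw [hsign y hy]; exact mul_pos (hkeypos y hy) h
  have hFneg : ∀ y ∈ Set.Ioo (0 : ℝ) y₀, F y < 0 → f y < 0 := by
    intro y hy h
    rw [hsign y hy]; exact mul_neg_of_pos_of_neg (hkeypos y hy) h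
  have hFzero : ∀ y ∈ Set.Ioo (0 : ℝ) y₀, F y = 0 → f y = 0 := by
    intro y hy h
    rw [hsign y hy, h, mul_zero]
  have hF0 : 0 < F 0 := by
    have hu0 : u 0 = 0 := hr'0
    simp only [hFdef, hu0, hr0]
    nlinarith
  by_cases hcase : ∀ y ∈ Set.Ioo (0 : ℝ) y₀, 0 < F y
  · exact Or.inl fun y hy => hFpos y hy (hcase y hy)
  right
  push_neg at hcase
  obtain ⟨z, hz, hzF⟩ := hcase
  -- first zero of F
  have hsub0z : Set.Icc (0 : ℝ) z ⊆ S := fun x hx => ⟨hx.1, lt_of_le_of_lt hx.2 hz.2⟩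
  have hFcz : ContinuousOn F (Set.Icc 0 z) := hFcont.mono hsub0z
  set Z := Set.Icc (0 : ℝ) z ∩ F ⁻¹' {0} with hZdef
  have hZne : Z.Nonempty := by
    have h0 : (0 : ℝ) ∈ Set.Icc (F z) (F 0) := ⟨hzF, hF0.le⟩
    obtain ⟨c, hc1, hc2⟩ := intermediate_value_Icc' hz.1.le hFcz h0
    exact ⟨c, hc1, hc2⟩
  have hZclosed : IsClosed Z := hFcz.preimage_isClosed_of_isClosed isClosed_Icc isClosed_singleton
  have hZbdd : BddBelow Z := (bddBelow_Icc).mono Set.inter_subset_left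
  set y₁ := sInf Z with hy₁def
  have hy₁Z : y₁ ∈ Z := hZclosed.csInf_mem hZne hZbdd
  have hy₁F : F y₁ = 0 := hy₁Z.2
  have hy₁Icc : y₁ ∈ Set.Icc (0 : ℝ) z := hy₁Z.1
  have hy₁pos : 0 < y₁ := by
    rcases lt_or_eq_of_le hy₁Icc.1 with h | h
    · exact h
    · exfalso; rw [← h] at hy₁F; linarith
  have hy₁lt : y₁ < y₀ := lt_of_le_of_lt hy₁Icc.2 hz.2
  have hy₁Ioo : y₁ ∈ Set.Ioo (0 : ℝ) y₀ := ⟨hy₁pos, hy₁lt⟩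
  -- F positive before y₁
  have hFbefore : ∀ y, 0 ≤ y → y < y₁ → 0 < F y := by
    intro y hy0 hyy₁
    by_contra h
    push_neg at h
    have hyz : y ≤ z := le_trans hyy₁.le hy₁Icc.2
    have h0 : (0 : ℝ) ∈ Set.Icc (F y) (F 0) := ⟨h, hF0.le⟩
    obtain ⟨c, hc1, hc2⟩ := intermediate_value_Icc' hy0 (hFcz.mono (Set.Icc_subset_Icc_right hyz)) h0
    have hcZ : c ∈ Z := ⟨⟨hc1.1, le_trans hc1.2 hyz⟩, hc2⟩
    have : y₁ ≤ c := csInf_le hZbdd hcZ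
    linarith [hc1.2]
  have hfpos1 : ∀ y ∈ Set.Ioo (0 : ℝ) y₁, 0 < f y :=
    fun y hy => hFpos y ⟨hy.1, hy.2.trans hy₁lt⟩ (hFbefore y hy.1.le hy.2)
  -- u y₁ > 0
  have hsub01 : Set.Icc (0 : ℝ) y₁ ⊆ S := fun x hx => ⟨hx.1, lt_of_le_of_lt hx.2 hy₁lt⟩
  have hu_mono : StrictMonoOn u (Set.Icc 0 y₁) := by
    apply strictMonoOn_of_deriv_pos (convex_Icc 0 y₁) (hu_cont.mono hsub01)
    intro x hx
    rw [interior_Icc] at hx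
    have hnh : S ∈ nhds x := Ico_mem_nhds hx.1 (lt_trans hx.2 hy₁lt)
    rw [← derivWithin_of_mem_nhds (f := u) hnh, ← hfdef]
    exact hfpos1 x hx
  have hu₁pos : 0 < u y₁ := by
    have h := hu_mono (Set.left_mem_Icc.2 hy₁pos.le) (Set.right_mem_Icc.2 hy₁pos.le) hy₁pos
    rwa [hr'0] at h
  have hfy₁ : f y₁ = 0 := hFzero y₁ hy₁Ioo hy₁F
  -- F negative after y₁
  have hFafter : ∀ y ∈ Set.Ioo y₁ y₀, F y < 0 := by
    by_contra hcon
    push_neg at hcon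
    obtain ⟨z₂, hz₂, hz₂F⟩ := hcon
    -- derivative of F at y₁ is negative
    have hd := hFder y₁ hy₁Ioo
    rw [hfy₁] at hd
    have hd' : HasDerivAt F (-(u y₁ * (1 + (u y₁) ^ 2))) y₁ := by
      convert hd using 1; ring
    have hdneg : -(u y₁ * (1 + (u y₁) ^ 2)) < 0 := by nlinarith
    -- F < 0 just to the right of y₁
    have hslope := hasDerivAt_iff_tendsto_slope.mp hd'
    have hev : ∀ᶠ x in nhdsWithin y₁ {y₁}ᶜ, slope F y₁ x < 0 :=
      hslope.eventually (gt_mem_nhds hdneg)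
    have hev' : ∀ᶠ x in nhdsWithin y₁ (Set.Ioi y₁), slope F y₁ x < 0 :=
      hev.filter_mono (nhdsWithin_mono y₁ (fun x hx => ne_of_gt hx))
    obtain ⟨w, hw, hwsub⟩ :=
      (mem_nhdsGT_iff_exists_Ioo_subset' hz₂.1).mp hev'
    have hFnear : ∀ x ∈ Set.Ioo y₁ w, F x < 0 := by
      intro x hx
      have hs := hwsub hx
      simp only [Set.mem_setOf_eq] at hs
      rw [slope_def_field, hy₁F, sub_zero] at hs
      rcases div_neg_iff.mp hs with ⟨_, h2⟩ | ⟨h1, _⟩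
      · linarith [hx.1]
      · exact h1
    -- pick p with y₁ < p and F < 0 on (y₁, p]
    set m := min w z₂ with hmdef
    have hy₁m : y₁ < m := lt_min hw hz₂.1
    set p := (y₁ + m) / 2 with hpdef
    have hy₁p : y₁ < p := by simp only [hpdef]; linarith
    have hpm : p < m := by simp only [hpdef]; linarith
    have hpz₂ : p < z₂ := lt_of_lt_of_le hpm (min_le_right _ _)
    have hpw : p < w := lt_of_lt_of_le hpm (min_le_left _ _)
    have hFp : F p < 0 := hFnear p ⟨hy₁p, hpw⟩
    -- next zero y₂
    have hsubpz : Set.Icc p z₂ ⊆ S := fun x hx =>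
      ⟨le_trans (le_trans hy₁pos.le hy₁p.le) hx.1, lt_of_le_of_lt hx.2 hz₂.2⟩
    have hFcp : ContinuousOn F (Set.Icc p z₂) := hFcont.mono hsubpz
    set T := Set.Icc p z₂ ∩ F ⁻¹' {0} with hTdef
    have hTne : T.Nonempty := by
      have h0 : (0 : ℝ) ∈ Set.Icc (F p) (F z₂) := ⟨hFp.le, hz₂F⟩
      obtain ⟨c, hc1, hc2⟩ := intermediate_value_Icc hpz₂.le hFcp h0
      exact ⟨c, hc1, hc2⟩
    have hTclosed : IsClosed T :=
      hFcp.preimage_isClosed_of_isClosed isClosed_Icc isClosed_singleton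
    have hTbdd : BddBelow T := (bddBelow_Icc).mono Set.inter_subset_left
    set y₂ := sInf T with hy₂def
    have hy₂T : y₂ ∈ T := hTclosed.csInf_mem hTne hTbdd
    have hy₂F : F y₂ = 0 := hy₂T.2
    have hy₂Icc : y₂ ∈ Set.Icc p z₂ := hy₂T.1
    have hpy₂ : p < y₂ := by
      rcases lt_or_eq_of_le hy₂Icc.1 with h | h
      · exact h
      · exfalso; rw [← h] at hy₂F; linarith
    have hy₁y₂ : y₁ < y₂ := lt_trans hy₁p hpy₂
    have hy₂lt : y₂ < y₀ := lt_of_le_of_lt hy₂Icc.2 hz₂.2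
    have hy₂Ioo : y₂ ∈ Set.Ioo (0 : ℝ) y₀ := ⟨lt_trans hy₁pos hy₁y₂, hy₂lt⟩
    -- F < 0 on (y₁, y₂)
    have hFmid : ∀ x ∈ Set.Ioo y₁ y₂, F x < 0 := by
      intro x hx
      rcases lt_or_ge x p with h | h
      · exact hFnear x ⟨hx.1, lt_of_lt_of_le (lt_of_lt_of_le h hpm.le) (min_le_left _ _)⟩
      · by_contra hc
        push_neg at hc
        have hxz₂ : x ≤ z₂ := le_trans hx.2.le hy₂Icc.2
        have h0 : (0 : ℝ) ∈ Set.Icc (F p) (F x) := ⟨hFp.le, hc⟩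
        obtain ⟨c, hc1, hc2⟩ :=
          intermediate_value_Icc h (hFcp.mono (Set.Icc_subset_Icc_right hxz₂)) h0
        have hcT : c ∈ T := ⟨⟨hc1.1, le_trans hc1.2 hxz₂⟩, hc2⟩
        have : y₂ ≤ c := csInf_le hTbdd hcT
        linarith [hc1.2, hx.2]
    have hfy₂ : f y₂ = 0 := hFzero y₂ hy₂Ioo hy₂F
    have hry₂ := hpos y₂ ⟨hy₂Ioo.1.le, hy₂Ioo.2⟩
    -- trichotomy on u y₂
    rcases lt_trichotomy (u y₂) 0 with hu₂ | hu₂ | hu₂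
    · -- u y₂ < 0 : impossible via the barrier u = -c
      set c := Real.sqrt (lam * ((n : ℝ) - 1) - 1) with hcdef
      have hcpos : 0 < c := Real.sqrt_pos.mpr (by linarith)
      have hcsq : c ^ 2 = lam * ((n : ℝ) - 1) - 1 := Real.sq_sqrt (by linarith)
      have hFy₂' : lam * ((n : ℝ) - 1) * (r y₂ - y₂ * u y₂) - r y₂ * (1 + (u y₂) ^ 2) = 0 :=
        hy₂F
      have hy₂pos : 0 < y₂ := hy₂Ioo.1
      have key : r y₂ * (lam * ((n : ℝ) - 1) - 1 - (u y₂) ^ 2) =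
          lam * ((n : ℝ) - 1) * y₂ * u y₂ := by linear_combination hFy₂'
      have hrhsneg : lam * ((n : ℝ) - 1) * y₂ * u y₂ < 0 :=
        mul_neg_of_pos_of_neg (mul_pos (by linarith) hy₂pos) hu₂
      have husq : lam * ((n : ℝ) - 1) - 1 < (u y₂) ^ 2 := by
        by_contra h
        push_neg at h
        have h2 : 0 ≤ r y₂ * (lam * ((n : ℝ) - 1) - 1 - (u y₂) ^ 2) :=
          mul_nonneg hry₂.le (by linarith)
        rw [key] at h2
        linarith
      have hu₂c : u y₂ < -c := by
        by_contra h
        push_neg at h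
        nlinarith [mul_nonneg (by linarith : (0:ℝ) ≤ c + u y₂)
          (by linarith : (0:ℝ) ≤ c - u y₂)]
      -- IVT for u on [y₁, y₂]
      have hsub12 : Set.Icc y₁ y₂ ⊆ S := fun x hx =>
        ⟨le_trans hy₁pos.le hx.1, lt_of_le_of_lt hx.2 hy₂lt⟩
      have hucont' : ContinuousOn u (Set.Icc y₁ y₂) := hu_cont.mono hsub12
      have h0 : (-c) ∈ Set.Icc (u y₂) (u y₁) := ⟨hu₂c.le, by linarith⟩
      obtain ⟨y₃, hy₃Icc, hy₃u⟩ := intermediate_value_Icc' hy₁y₂.le hucont' h0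
      have hy₃ne1 : y₃ ≠ y₁ := by
        intro h; rw [h] at hy₃u; rw [hy₃u] at hu₁pos; linarith
      have hy₃ne2 : y₃ ≠ y₂ := by
        intro h; rw [h] at hy₃u; rw [hy₃u] at hu₂c; linarith
      have hy₃Ioo : y₃ ∈ Set.Ioo y₁ y₂ :=
        ⟨lt_of_le_of_ne hy₃Icc.1 (Ne.symm hy₃ne1), lt_of_le_of_ne hy₃Icc.2 hy₃ne2⟩
      have hFy₃ : F y₃ < 0 := hFmid y₃ hy₃Ioo
      have hy₃pos : 0 < y₃ := lt_trans hy₁pos hy₃Ioo.1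
      have hFy₃' : F y₃ = lam * ((n : ℝ) - 1) * (c * y₃) := by
        simp only [hFdef, hy₃u]
        linear_combination (-(r y₃)) * hcsq
      have hcontra : 0 < lam * ((n : ℝ) - 1) * (c * y₃) :=
        mul_pos (by linarith) (mul_pos hcpos hy₃pos)
      rw [hFy₃'] at hFy₃
      linarith
    · -- u y₂ = 0 : impossible since F y₂ would be positive
      have : F y₂ = r y₂ * (lam * ((n : ℝ) - 1) - 1) := by
        simp only [hFdef, hu₂]; ring
      rw [this] at hy₂F
      nlinarith
    · -- u y₂ > 0 : down-crossing contradiction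
      have hd₂ := hFder y₂ hy₂Ioo
      rw [hfy₂] at hd₂
      have hd₂' : HasDerivAt F (-(u y₂ * (1 + (u y₂) ^ 2))) y₂ := by
        convert hd₂ using 1; ring
      have hd₂neg : -(u y₂ * (1 + (u y₂) ^ 2)) < 0 := by nlinarith
      -- but slopes from the left are nonnegative
      have hslope₂ := hasDerivAt_iff_tendsto_slope.mp hd₂'
      have hslope₂' : Tendsto (slope F y₂) (nhdsWithin y₂ (Set.Iio y₂))
          (nhds (-(u y₂ * (1 + (u y₂) ^ 2)))) :=
        hslope₂.mono_left (nhdsWithin_mono y₂ (fun x hx => ne_of_lt hx))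
      have hevmem : Set.Ioo y₁ y₂ ∈ nhdsWithin y₂ (Set.Iio y₂) :=
        Ioo_mem_nhdsLT_of_mem ⟨hy₁y₂, le_refl y₂⟩
      have hevslope : ∀ᶠ x in nhdsWithin y₂ (Set.Iio y₂), 0 ≤ slope F y₂ x := by
        filter_upwards [hevmem] with x hx
        rw [slope_def_field, hy₂F, sub_zero]
        have h1 : F x < 0 := hFmid x hx
        have h2 : x - y₂ < 0 := by linarith [hx.2]
        exact le_of_lt (div_pos_iff.mpr (Or.inr ⟨h1, h2⟩))
      have : (0 : ℝ) ≤ -(u y₂ * (1 + (u y₂) ^ 2)) := ge_of_tendsto hslope₂' hevslope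
      linarith
  refine ⟨y₁, hy₁Ioo, hfy₁, hfpos1, fun y hy => hFneg y ⟨lt_trans hy₁pos hy.1, hy.2⟩ (hFafter y hy)⟩
end

section
/- Let n ≥ 2 be an integer, λ > 1/(n-1), μ > 0, and let r : ℝ → ℝ be a twice continuously differentiable function with r(y) > 0 and r(y) > y·r'(y) for all y ∈ ℝ, r(0) = μ, r'(0) = 0, solving r''(y)/(1 + r'(y)²) = (n-1)/r(y) − (1 + r'(y)²)/(λ(r(y) − y·r'(y))) for all y ∈ ℝ. Then it is not the case that r''(y) > 0 for all y > 0. -/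
/-- The solution of the inverse mean curvature flow soliton ODE cannot be
strictly convex on all of `(0, ∞)`. -/
theorem not_forall_second_deriv_pos (n : ℕ) (hn : 2 ≤ n) (lam : ℝ)
    (hlam : 1 / ((n : ℝ) - 1) < lam) (mu : ℝ) (hmu : 0 < mu)
    (r : ℝ → ℝ) (hC : ContDiff ℝ 2 r)
    (hpos : ∀ y : ℝ, 0 < r y)
    (hstruct : ∀ y : ℝ, y * deriv r y < r y)
    (hr0 : r 0 = mu) (hr'0 : deriv r 0 = 0)
    (hode : ∀ y : ℝ,
      deriv (deriv r) y / (1 + (deriv r y) ^ 2) =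
        ((n : ℝ) - 1) / r y -
          (1 + (deriv r y) ^ 2) / (lam * (r y - y * deriv r y))) :
    ¬ (∀ y : ℝ, 0 < y → 0 < deriv (deriv r) y) := by
  intro H
  have hN : (1 : ℝ) ≤ (n : ℝ) - 1 := by
    have : (2 : ℝ) ≤ (n : ℝ) := by exact_mod_cast hn
    linarith
  have hlam0 : (0 : ℝ) < lam := lt_trans (by positivity) hlam
  -- regularity facts
  have hC2 : ContDiff ℝ (1 + 1) r := by
    have : ((1:WithTop ℕ∞) + 1) = 2 := by norm_num
    rw [this]; exact hC
  have hder := (contDiff_succ_iff_deriv.mp hC2)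
  have hdr : Differentiable ℝ r := hder.1
  have hC1 : ContDiff ℝ 1 (deriv r) := hder.2.2
  have hdr' : Differentiable ℝ (deriv r) := hC1.differentiable one_ne_zero
  -- r' is strictly increasing on [0,∞)
  have hmono : StrictMonoOn (deriv r) (Set.Ici (0 : ℝ)) := by
    apply strictMonoOn_of_deriv_pos (convex_Ici 0) hdr'.continuous.continuousOn
    intro x hx
    rw [interior_Ici] at hx
    exact H x hx
  have hr'pos : ∀ y : ℝ, 0 < y → 0 < deriv r y := by
    intro y hy
    have := hmono (Set.self_mem_Ici) (Set.mem_Ici.mpr hy.le) hy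
    rwa [hr'0] at this
  -- g(y) = r y - y * r' y is antitone on [0,∞)
  set g : ℝ → ℝ := fun y => r y - y * deriv r y with hg
  have hgderiv : ∀ y : ℝ, HasDerivAt g
      (deriv r y - (1 * deriv r y + y * deriv (deriv r) y)) y := by
    intro y
    exact ((hdr y).hasDerivAt).sub ((hasDerivAt_id' y).mul (hdr' y).hasDerivAt)
  have hganti : AntitoneOn g (Set.Ici (0 : ℝ)) := by
    apply antitoneOn_of_deriv_nonpos (convex_Ici 0)
    · exact (hdr.continuous.sub (continuous_id.mul hdr'.continuous)).continuousOn
    · intro x _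
      exact ((hgderiv x).differentiableAt).differentiableWithinAt
    · intro x hx
      rw [interior_Ici] at hx
      have hx' : (0:ℝ) < x := hx
      rw [(hgderiv x).deriv]
      have h1 : 0 < deriv (deriv r) x := H x hx'
      nlinarith [mul_pos hx' h1]
  have hgle : ∀ y : ℝ, 0 ≤ y → g y ≤ mu := by
    intro y hy
    have := hganti Set.self_mem_Ici (Set.mem_Ici.mpr hy) hy
    simpa [hg, hr0] using this
  -- linear lower bound for r using c = r'(1) > 0
  set c : ℝ := deriv r 1 with hc
  clear_value c
  have hcpos : 0 < c := hc ▸ hr'pos 1 one_pos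
  have hlin : MonotoneOn (fun y => r y - c * y) (Set.Ici (1 : ℝ)) := by
    apply monotoneOn_of_deriv_nonneg (convex_Ici 1)
    · exact (hdr.continuous.sub (continuous_const.mul continuous_id)).continuousOn
    · intro x _
      exact ((hdr x).sub ((differentiable_id.const_mul c) x)).differentiableWithinAt
    · intro x hx
      rw [interior_Ici] at hx
      have hd : HasDerivAt (fun y => r y - c * y) (deriv r x - c * 1) x :=
        ((hdr x).hasDerivAt).sub ((hasDerivAt_id' x).const_mul c)
      have hx1 : (1:ℝ) < x := hx
      rw [hd.deriv]
      have : c < deriv r x := hc ▸ hmono (by norm_num) (Set.mem_Ici.mpr (by linarith)) hx1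
      linarith
  -- the contradiction point
  set Y : ℝ := 1 + lam * ((n : ℝ) - 1) * mu / c with hY
  clear_value Y
  have hY1 : (1 : ℝ) ≤ Y := by
    have : 0 < lam * ((n : ℝ) - 1) * mu / c := by positivity
    linarith [hY]
  have hrY : lam * ((n : ℝ) - 1) * mu < r Y := by
    have := hlin (Set.self_mem_Ici) (Set.mem_Ici.mpr hY1) hY1
    have h1 : 0 < r 1 := hpos 1
    have hc' : c ≠ 0 := ne_of_gt hcpos
    have : r 1 - c * 1 ≤ r Y - c * Y := this
    have hcY : c * Y = c + lam * ((n : ℝ) - 1) * mu := by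
      rw [hY]; field_simp
    linarith
  -- ODE at Y
  have hgY : 0 < g Y := by
    have := hstruct Y
    simp only [hg]
    linarith
  have hr'Y : (0:ℝ) < 1 + (deriv r Y) ^ 2 := by positivity
  have hYpos : 0 < Y := lt_of_lt_of_le one_pos hY1
  have hodeY := hode Y
  have hlhs : 0 < deriv (deriv r) Y / (1 + (deriv r Y) ^ 2) :=
    div_pos (H Y hYpos) hr'Y
  rw [hodeY] at hlhs
  have hkey : (1 + (deriv r Y) ^ 2) / (lam * (r Y - Y * deriv r Y)) < ((n : ℝ) - 1) / r Y := by
    linarith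
  have hgle' : g Y ≤ mu := hgle Y hYpos.le
  have hrYpos : 0 < r Y := hpos Y
  have hlg : 0 < lam * g Y := mul_pos hlam0 hgY
  -- cross multiply: (1 + r'^2) * r Y < (n-1) * (lam * g Y)
  have hcm : (1 + (deriv r Y) ^ 2) * r Y < ((n : ℝ) - 1) * (lam * g Y) := by
    have := (div_lt_div_iff₀ hlg hrYpos).mp hkey
    exact this
  have h1 : r Y ≤ (1 + (deriv r Y) ^ 2) * r Y := by nlinarith
  have h2 : ((n : ℝ) - 1) * (lam * g Y) ≤ lam * ((n : ℝ) - 1) * mu := by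
    have : 0 ≤ lam * ((n : ℝ) - 1) := by positivity
    nlinarith
  linarith
end
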